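/- Let A be a unital Banach algebra, D : A → A a bounded derivation (a bounded linear map with D(x·y) = D(x)·y + x·D(y)), and b ∈ A. Let R_b : A → A be right multiplication, R_b(x) := x·b, set W_t := exp(t(D + R_b))(1), and let ad_b : A → A be the bounded linear map ad_b(x) := b·x − x·b. Then W_t is invertible in A for every t ∈ ℝ, and W_t⁻¹·exp(tD)(x)·W_t = exp(t(D − ad_b))(x) for all x ∈ A and t ∈ ℝ. -/

import Mathlib

/-!
Every product of the form `exp(tP)(x) · exp(tQ)(y)` solves the linear ODE `f' = R f` as soon as
`P x · y + x · Q y = R (x · y)`, so by uniqueness it equals `exp(tR)(x · y)`. With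
`V_t := exp(t(D − L_b))(1)`, where `L_b` is left multiplication, the pairs
`(D − L_b, D + R_b)`, `(D + R_b, D − L_b)` and `(D − L_b, D)` satisfy this rule with
`R = D − ad_b`, `D`, `D − L_b` respectively. Since `D` and `D − ad_b` kill `1`, the first two
give `V_t W_t = 1 = W_t V_t`, and combining the third with the first gives the conjugation formula.
-/

open NormedSpace

theorem apply_one_eq_zero_of_leibniz {A : Type*} [Ring A] (D : A → A)
    (hD : ∀ x y : A, D (x * y) = D x * y + x * D y) : D 1 = 0 := by
  simpa using hD 1 1

section ExpSmulApply

variable {𝕂 E : Type*} [RCLike 𝕂] [NormedAddCommGroup E] [NormedSpace 𝕂 E]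

theorem exp_zero_smul_apply (T : E →L[𝕂] E) (v : E) : exp ((0 : 𝕂) • T) v = v := by
  rw [zero_smul, exp_zero, one_apply_eq_self]

variable [CompleteSpace E]

theorem hasDerivAt_exp_smul_apply (T : E →L[𝕂] E) (x : E) (t : 𝕂) :
    HasDerivAt (fun u : 𝕂 => exp (u • T) x) (T (exp (t • T) x)) t := by
  simpa using (hasDerivAt_exp_smul_const' T t).clm_apply (hasDerivAt_const t x)

theorem eq_exp_smul_apply_of_hasDerivAt {T : E →L[𝕂] E} {f : 𝕂 → E}
    (hf : ∀ t, HasDerivAt f (T (f t)) t) (t : 𝕂) : f t = exp (t • T) (f 0) := by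
  have hgauge : ∀ s, HasDerivAt (fun u => exp (u • -T) (f u)) 0 s := by
    intro s
    convert (hasDerivAt_exp_smul_const (-T) s).clm_apply (hf s) using 1
    simp
  have hconst := is_const_of_deriv_eq_zero (fun u => (hgauge u).differentiableAt)
    (fun u => (hgauge u).deriv) t 0
  have hinv : exp (t • T) * exp (t • -T) = 1 := by
    -- `exp_add_of_commute` is stated for Banach algebras over `ℚ`.
    let : NormedAlgebra ℚ (E →L[𝕂] E) := .restrictScalars ℚ 𝕂 _
    rw [smul_neg, ← exp_add_of_commute (Commute.refl _).neg_right, add_neg_cancel, exp_zero]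
  calc f t = (exp (t • T) * exp (t • -T)) (f t) := by rw [hinv, one_apply_eq_self]
    _ = exp (t • T) (f 0) := by
      rw [mul_apply_eq_comp, hconst, exp_zero_smul_apply]

theorem exp_smul_apply_of_apply_eq_zero {T : E →L[𝕂] E} {v : E} (hv : T v = 0) (t : 𝕂) :
    exp (t • T) v = v :=
  (eq_exp_smul_apply_of_hasDerivAt (f := fun _ => v)
    (fun s => by simpa [hv] using hasDerivAt_const s v) t).symm

end ExpSmulApply

theorem exp_smul_apply_mul_exp_smul_apply {𝕂 A : Type*} [RCLike 𝕂] [NormedRing A]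
    [NormedAlgebra 𝕂 A] [CompleteSpace A] {P Q R : A →L[𝕂] A}
    (hPQR : ∀ x y : A, P x * y + x * Q y = R (x * y)) (t : 𝕂) (x y : A) :
    exp (t • P) x * exp (t • Q) y = exp (t • R) (x * y) := by
  have hODE : ∀ s : 𝕂, HasDerivAt (fun u : 𝕂 => exp (u • P) x * exp (u • Q) y)
      (R (exp (s • P) x * exp (s • Q) y)) s := fun s => by
    rw [← hPQR]
    exact (hasDerivAt_exp_smul_apply P x s).mul (hasDerivAt_exp_smul_apply Q y s)
  simpa only [exp_zero_smul_apply] using eq_exp_smul_apply_of_hasDerivAt hODE t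

/-- with `W_t := exp(t(D+R_b))(1)` for a bounded derivation `D`, right
multiplication `R_b`, and `ad_b(x) = b·x − x·b`, each `W_t` is invertible and
`W_t⁻¹·exp(tD)(x)·W_t = exp(t(D − ad_b))(x)`. -/
theorem stmt9 (A : Type*) [NormedRing A] [NormedAlgebra ℝ A] [CompleteSpace A]
    (D : A →L[ℝ] A) (hD : ∀ x y : A, D (x * y) = D x * y + x * D y)
    (b : A) (Rb : A →L[ℝ] A) (hRb : ∀ x : A, Rb x = x * b)
    (adb : A →L[ℝ] A) (hadb : ∀ x : A, adb x = b * x - x * b)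
    (W : ℝ → A) (hW : ∀ t : ℝ, W t = NormedSpace.exp (t • (D + Rb)) 1) :
    (∀ t : ℝ, IsUnit (W t)) ∧
    ∀ (t : ℝ) (x : A),
      Ring.inverse (W t) * NormedSpace.exp (t • D) x * W t =
        NormedSpace.exp (t • (D - adb)) x := by
  set Lb := ContinuousLinearMap.mul ℝ A b
  have hLeft : ∀ x y : A, (D - Lb) x * y + x * D y = (D - Lb) (x * y) := fun x y => by
    simp only [sub_apply, ContinuousLinearMap.mul_apply', hD, Lb]
    noncomm_ring
  have hConj : ∀ x y : A, (D - Lb) x * y + x * (D + Rb) y = (D - adb) (x * y) := fun x y => by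
    simp only [sub_apply, add_apply, ContinuousLinearMap.mul_apply', hD, hRb, hadb, Lb]
    noncomm_ring
  have hRight : ∀ x y : A, (D + Rb) x * y + x * (D - Lb) y = D (x * y) := fun x y => by
    simp only [sub_apply, add_apply, ContinuousLinearMap.mul_apply', hD, hRb, Lb]
    noncomm_ring
  have hD1 : D 1 = 0 := apply_one_eq_zero_of_leibniz D hD
  let V : ℝ → A := fun t => exp (t • (D - Lb)) 1
  have hVW : ∀ t, V t * W t = 1 := fun t => by
    rw [hW, exp_smul_apply_mul_exp_smul_apply hConj, mul_one]
    exact exp_smul_apply_of_apply_eq_zero (by simp [hadb, hD1]) t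
  have hWV : ∀ t, W t * V t = 1 := fun t => by
    rw [hW, exp_smul_apply_mul_exp_smul_apply hRight, mul_one]
    exact exp_smul_apply_of_apply_eq_zero hD1 t
  let U : ℝ → Aˣ := fun t => ⟨W t, V t, hWV t, hVW t⟩
  refine ⟨fun t => (U t).isUnit, fun t x => ?_⟩
  rw [show Ring.inverse (W t) = V t from Ring.inverse_unit (U t),
    exp_smul_apply_mul_exp_smul_apply hLeft, one_mul, hW,
    exp_smul_apply_mul_exp_smul_apply hConj, mul_one]
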